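/- There is an absolute constant C > 0 such that the following holds: if P : (1,∞) → ℝ is four times differentiable with P(x) > 0, P'(x) < 0, P''(x) > 0, P'''(x) < 0 and P''''(x) > 0 for all x > 1, then for every n ∈ {1, 2, 3, 4} and every x > 1, (x−1)ⁿ · |P⁽ⁿ⁻¹⁾(x)| ≤ C · (x−1) · P((x−1)/2 + 1). (Here P⁽⁰⁾ = P.) -/

import Mathlib

/-!
With `Q k = (-1)ᵏ P⁽ᵏ⁾`, all of `Q 0, …, Q 4` are positive and `(Q k)' = -Q (k + 1)`, so
`Q 0, …, Q 3` are decreasing. The mean value theorem on `[x - δ, x]` then gives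
`δ Q (k + 1) x ≤ Q k (x - δ) - Q k x ≤ Q k (x - δ)`; iterating this `k` times with
`δ = (x - 1) / (2 (k + 1))` bounds `δᵏ Q k x` by `P ((x - 1) / 2 + 1)`.
-/

noncomputable section

open Set

section AlternatingChain

variable {Q : ℕ → ℝ → ℝ} {a : ℝ} {N : ℕ}

theorem antitoneOn_of_hasDerivAt_neg_succ
    (hderiv : ∀ k < N, ∀ y, a < y → HasDerivAt (Q k) (-Q (k + 1) y) y)
    (hpos : ∀ k ≤ N, ∀ y, a < y → 0 < Q k y) {k : ℕ} (hk : k < N) :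
    AntitoneOn (Q k) (Ioi a) := by
  refine antitoneOn_of_hasDerivWithinAt_nonpos (f' := fun y => -Q (k + 1) y) (convex_Ioi a)
    (fun y hy => (hderiv k hk y hy).continuousAt.continuousWithinAt) (fun y hy => ?_)
    (fun y hy => ?_) <;> rw [interior_Ioi] at hy
  · exact (hderiv k hk y hy).hasDerivWithinAt
  · exact neg_nonpos.2 (hpos (k + 1) hk y hy).le

theorem mul_le_of_hasDerivAt_neg_succ
    (hderiv : ∀ k < N, ∀ y, a < y → HasDerivAt (Q k) (-Q (k + 1) y) y)
    (hpos : ∀ k ≤ N, ∀ y, a < y → 0 < Q k y) {k : ℕ} (hk : k + 1 < N)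
    {x δ : ℝ} (hδ : 0 < δ) (hxδ : a < x - δ) :
    δ * Q (k + 1) x ≤ Q k (x - δ) := by
  have hx : a < x := by linarith
  obtain ⟨c, ⟨hac, hcx⟩, hslope⟩ := exists_hasDerivAt_eq_slope (Q k) (fun y => -Q (k + 1) y)
    (show x - δ < x by linarith)
    (fun y hy => (hderiv k (by omega) y (hxδ.trans_le hy.1)).continuousAt.continuousWithinAt)
    (fun y hy => hderiv k (by omega) y (hxδ.trans hy.1))
  have hQc : Q (k + 1) x ≤ Q (k + 1) c :=
    antitoneOn_of_hasDerivAt_neg_succ hderiv hpos hk (hxδ.trans hac) hx hcx.le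
  have hmvt : Q k (x - δ) - Q k x = δ * Q (k + 1) c := by
    rw [sub_sub_cancel, eq_div_iff hδ.ne'] at hslope
    linarith
  calc δ * Q (k + 1) x ≤ δ * Q (k + 1) c := by gcongr
    _ = Q k (x - δ) - Q k x := hmvt.symm
    _ ≤ Q k (x - δ) := sub_le_self _ (hpos k (by omega) x hx).le

theorem pow_mul_le_of_hasDerivAt_neg_succ
    (hderiv : ∀ k < N, ∀ y, a < y → HasDerivAt (Q k) (-Q (k + 1) y) y)
    (hpos : ∀ k ≤ N, ∀ y, a < y → 0 < Q k y) {k : ℕ} (hk : k < N)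
    {x y δ : ℝ} (hδ : 0 < δ) (hy : a < y) (hyx : y ≤ x - k * δ) :
    δ ^ k * Q k x ≤ Q 0 y := by
  induction k generalizing x with
  | zero =>
    have hyx : y ≤ x := by simpa using hyx
    simpa using antitoneOn_of_hasDerivAt_neg_succ hderiv hpos hk hy (hy.trans_le hyx) hyx
  | succ k ih =>
    push_cast at hyx
    have hstep := mul_le_of_hasDerivAt_neg_succ hderiv hpos hk hδ
      (show a < x - δ by nlinarith [(Nat.cast_nonneg k : (0 : ℝ) ≤ k)])
    calc δ ^ (k + 1) * Q (k + 1) x = δ ^ k * (δ * Q (k + 1) x) := by ring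
      _ ≤ δ ^ k * Q k (x - δ) := by gcongr
      _ ≤ Q 0 y := ih (by omega) (by linarith)

theorem sub_pow_mul_le_of_hasDerivAt_neg_succ
    (hderiv : ∀ k < N, ∀ y, a < y → HasDerivAt (Q k) (-Q (k + 1) y) y)
    (hpos : ∀ k ≤ N, ∀ y, a < y → 0 < Q k y) {k : ℕ} (hk : k < N) {x : ℝ} (hx : a < x) :
    (x - a) ^ k * Q k x ≤ (2 * (k + 1)) ^ k * Q 0 ((x - a) / 2 + a) := by
  set δ := (x - a) / (2 * (k + 1))
  have hδ : 0 < δ := by positivity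
  have hchain := pow_mul_le_of_hasDerivAt_neg_succ hderiv hpos hk hδ
    (show a < (x - a) / 2 + a by linarith) (show (x - a) / 2 + a ≤ x - k * δ by
      have : k * δ ≤ (x - a) / 2 := by
        rw [mul_div_assoc', div_le_div_iff₀ (by positivity) two_pos]; nlinarith
      linarith)
  calc (x - a) ^ k * Q k x = (2 * (k + 1)) ^ k * (δ ^ k * Q k x) := by
        rw [← mul_assoc, ← mul_pow]; congr 2; simp only [δ]; field_simp
    _ ≤ _ := by gcongr

end AlternatingChain

def signedIteratedDeriv (f : ℝ → ℝ) (k : ℕ) (y : ℝ) : ℝ := (-1) ^ k * iteratedDeriv k f y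

@[simp]
theorem signedIteratedDeriv_zero (f : ℝ → ℝ) : signedIteratedDeriv f 0 = f := by
  ext y
  simp [signedIteratedDeriv]

theorem hasDerivAt_signedIteratedDeriv {f : ℝ → ℝ} {k : ℕ} {y : ℝ}
    (hf : DifferentiableAt ℝ (iteratedDeriv k f) y) :
    HasDerivAt (signedIteratedDeriv f k) (-signedIteratedDeriv f (k + 1) y) y := by
  have h : HasDerivAt (signedIteratedDeriv f k) ((-1) ^ k * iteratedDeriv (k + 1) f y) y := by
    rw [iteratedDeriv_succ]
    exact hf.hasDerivAt.const_mul _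
  exact h.congr_deriv (by rw [signedIteratedDeriv, pow_succ]; ring)

theorem derivative_decay_bound :
    ∃ C : ℝ, 0 < C ∧ ∀ P : ℝ → ℝ,
      (∀ n : ℕ, n < 4 → ∀ x : ℝ, 1 < x → DifferentiableAt ℝ (iteratedDeriv n P) x) →
      (∀ x : ℝ, 1 < x → 0 < P x) →
      (∀ x : ℝ, 1 < x → iteratedDeriv 1 P x < 0) →
      (∀ x : ℝ, 1 < x → 0 < iteratedDeriv 2 P x) →
      (∀ x : ℝ, 1 < x → iteratedDeriv 3 P x < 0) →
      (∀ x : ℝ, 1 < x → 0 < iteratedDeriv 4 P x) →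
      ∀ n : ℕ, 1 ≤ n → n ≤ 4 → ∀ x : ℝ, 1 < x →
        (x - 1) ^ n * |iteratedDeriv (n - 1) P x| ≤
          C * (x - 1) * P ((x - 1) / 2 + 1) := by
  refine ⟨512, by norm_num, fun P hd hP0 hP1 hP2 hP3 hP4 n hn1 hn4 x hx => ?_⟩
  obtain ⟨k, rfl⟩ : ∃ k, n = k + 1 := ⟨n - 1, by omega⟩
  have hpos : ∀ k ≤ 4, ∀ y, 1 < y → 0 < signedIteratedDeriv P k y := by
    intro k hk y hy
    interval_cases k <;> norm_num [signedIteratedDeriv, -iteratedDeriv_one]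
    exacts [hP0 y hy, hP1 y hy, hP2 y hy, hP3 y hy, hP4 y hy]
  have hbound := sub_pow_mul_le_of_hasDerivAt_neg_succ (Q := signedIteratedDeriv P)
    (fun k hk y hy => hasDerivAt_signedIteratedDeriv (hd k hk y hy)) hpos
    (show k < 4 by omega) hx
  rw [signedIteratedDeriv_zero] at hbound
  have hconst : (2 * (k + 1 : ℝ)) ^ k ≤ 512 := by
    have hk : k ≤ 3 := by omega
    interval_cases k <;> norm_num
  have habs : |iteratedDeriv k P x| = signedIteratedDeriv P k x := by
    rw [← abs_of_pos (hpos k (by omega) x hx), signedIteratedDeriv, abs_mul, abs_pow, abs_neg,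
      abs_one, one_pow, one_mul]
  have hm : 0 < P ((x - 1) / 2 + 1) := hP0 _ (by linarith)
  calc (x - 1) ^ (k + 1) * |iteratedDeriv (k + 1 - 1) P x|
      = (x - 1) * ((x - 1) ^ k * signedIteratedDeriv P k x) := by
        rw [Nat.add_sub_cancel, habs]; ring
    _ ≤ (x - 1) * ((2 * (k + 1)) ^ k * P ((x - 1) / 2 + 1)) :=
      mul_le_mul_of_nonneg_left hbound (by linarith)
    _ ≤ (x - 1) * (512 * P ((x - 1) / 2 + 1)) := by gcongr
    _ = 512 * (x - 1) * P ((x - 1) / 2 + 1) := by ring
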